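/- arXiv:0906.2100 — 5 statements merged into one kernel-verified Lean document; each statement's English description precedes it below -/
import Mathlib

section
/- Suppose γ₂ > 0 is the positive root of ((a² + a)c₁ + (1 + a)c₂)γ₂² + (a(αc₁ - q - λ) + αc₂ - q - λ)γ₂ - αq = 0, where a, α, q, λ, c₂ > 0, c₁ > c₂, and c₁ > λ/α. Then c₂γ₂² + (αc₂ - q - λ)γ₂ - αq < 0. In particular, setting γ₁ = aγ₂, the product of the two roots γ₁, γ₃ of the quadratic c₁γ² + (c₁ + c₂)γ₂γ + c₂γ₂² + (αc₁ - q - λ)γ + (αc₂ - q - λ)γ₂ - αq = 0 satisfies c₁γ₁γ₃ < 0, so γ₃ < 0 < γ₁. -/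
/-!
Since γ₁ = aγ₂ is a root of the quadratic in γ, Vieta gives c₁γ₁γ₃ = g(γ₂), where
g(r) = c₂r² + (αc₂ - q - λ)r - αq = (c₂r - q)(r + α) - λr. If c₂γ₂ < q this is negative
outright. Otherwise the root equation of γ₂, rewritten as g(γ₂) = -aγ₂((a + 1)c₁γ₂ + c₂γ₂ + αc₁ - q - λ),
exhibits it as negative, because the net profit condition αc₁ > λ makes the bracket positive.
-/

theorem mul_mul_eq_of_quadratic_roots_of_ne {R : Type*} [CommRing R] [NoZeroDivisors R]
    {c b d x y : R} (hx : c * x ^ 2 + b * x + d = 0) (hy : c * y ^ 2 + b * y + d = 0)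
    (hxy : x ≠ y) : c * x * y = d := by
  have hsum : c * (x + y) + b = 0 := by
    have hfactor : (x - y) * (c * (x + y) + b) = 0 := by linear_combination hx - hy
    exact (mul_eq_zero.1 hfactor).resolve_left (sub_ne_zero.2 hxy)
  linear_combination x * hsum - hx

theorem quadratic_at_root_neg {a α q lam c₁ c₂ r : ℝ} (ha : 0 < a) (hα : 0 < α)
    (hlam : 0 ≤ lam) (hc₁ : 0 < c₁) (hnet : lam < α * c₁) (hr : 0 < r)
    (hroot : ((a ^ 2 + a) * c₁ + (1 + a) * c₂) * r ^ 2
        + (a * (α * c₁ - q - lam) + α * c₂ - q - lam) * r - α * q = 0) :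
    c₂ * r ^ 2 + (α * c₂ - q - lam) * r - α * q < 0 := by
  rcases lt_or_ge (c₂ * r) q with hsmall | hlarge
  · have hfactor : c₂ * r ^ 2 + (α * c₂ - q - lam) * r - α * q
        = (c₂ * r - q) * (r + α) - lam * r := by ring
    rw [hfactor]
    nlinarith [mul_neg_of_neg_of_pos (sub_neg.2 hsmall) (add_pos hr hα), mul_nonneg hlam hr.le]
  · have hbracket : 0 < (a + 1) * c₁ * r + c₂ * r + α * c₁ - q - lam := by
      nlinarith [mul_pos (mul_pos (by linarith : (0 : ℝ) < a + 1) hc₁) hr]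
    have hrewrite : c₂ * r ^ 2 + (α * c₂ - q - lam) * r - α * q
        = -(a * r * ((a + 1) * c₁ * r + c₂ * r + α * c₁ - q - lam)) := by
      linear_combination hroot
    rw [hrewrite, neg_neg_iff_pos]
    exact mul_pos (mul_pos ha hr) hbracket

theorem product_of_roots_neg_general (a α q lam c₁ c₂ γ₂ γ₁ γ₃ : ℝ)
    (ha : 0 < a) (hα : 0 < α) (hlam : 0 < lam)
    (hnet : lam / α < c₁)
    (hγ₂pos : 0 < γ₂)
    (hγ₂root : ((a^2 + a) * c₁ + (1 + a) * c₂) * γ₂^2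
        + (a * (α * c₁ - q - lam) + α * c₂ - q - lam) * γ₂ - α * q = 0)
    (hγ₁ : γ₁ = a * γ₂)
    (hγ₃root : c₁ * γ₃^2 + (c₁ + c₂) * γ₂ * γ₃ + c₂ * γ₂^2
        + (α * c₁ - q - lam) * γ₃ + (α * c₂ - q - lam) * γ₂ - α * q = 0)
    (hγ₃ne : γ₃ ≠ γ₁) :
    c₂ * γ₂^2 + (α * c₂ - q - lam) * γ₂ - α * q < 0 ∧
    c₁ * γ₁ * γ₃ < 0 ∧ γ₃ < 0 ∧ 0 < γ₁ := by
  have hc₁ : 0 < c₁ := (div_pos hlam hα).trans hnet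
  have hnet' : lam < α * c₁ := by rwa [div_lt_iff₀' hα] at hnet
  have hneg := quadratic_at_root_neg ha hα hlam.le hc₁ hnet' hγ₂pos hγ₂root
  have hγ₁pos : 0 < γ₁ := hγ₁ ▸ mul_pos ha hγ₂pos
  set b := (c₁ + c₂) * γ₂ + α * c₁ - q - lam
  have hγ₁quad : c₁ * γ₁ ^ 2 + b * γ₁ + (c₂ * γ₂^2 + (α * c₂ - q - lam) * γ₂ - α * q) = 0 := by
    rw [hγ₁]; linear_combination hγ₂root
  have hγ₃quad : c₁ * γ₃ ^ 2 + b * γ₃ + (c₂ * γ₂^2 + (α * c₂ - q - lam) * γ₂ - α * q) = 0 := by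
    linear_combination hγ₃root
  have hprod := mul_mul_eq_of_quadratic_roots_of_ne hγ₁quad hγ₃quad hγ₃ne.symm
  have hprod_neg : c₁ * γ₁ * γ₃ < 0 := hprod ▸ hneg
  exact ⟨hneg, hprod_neg, neg_of_mul_neg_right hprod_neg (mul_pos hc₁ hγ₁pos).le, hγ₁pos⟩

theorem product_of_roots_neg (a α q lam c₁ c₂ γ₂ γ₁ γ₃ : ℝ)
    (ha : 0 < a) (hα : 0 < α) (hq : 0 < q) (hlam : 0 < lam)
    (hc₂ : 0 < c₂) (hc : c₂ < c₁) (hnet : lam / α < c₁)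
    (hγ₂pos : 0 < γ₂)
    (hγ₂root : ((a^2 + a) * c₁ + (1 + a) * c₂) * γ₂^2
        + (a * (α * c₁ - q - lam) + α * c₂ - q - lam) * γ₂ - α * q = 0)
    (hγ₁ : γ₁ = a * γ₂)
    (hγ₃root : c₁ * γ₃^2 + (c₁ + c₂) * γ₂ * γ₃ + c₂ * γ₂^2
        + (α * c₁ - q - lam) * γ₃ + (α * c₂ - q - lam) * γ₂ - α * q = 0)
    (hγ₃ne : γ₃ ≠ γ₁) :
    c₂ * γ₂^2 + (α * c₂ - q - lam) * γ₂ - α * q < 0 ∧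
    c₁ * γ₁ * γ₃ < 0 ∧ γ₃ < 0 ∧ 0 < γ₁ :=
  product_of_roots_neg_general a α q lam c₁ c₂ γ₂ γ₁ γ₃ ha hα hlam hnet hγ₂pos hγ₂root hγ₁ hγ₃root
    hγ₃ne
end

section
/- Under the same setup, defining γ₁ₖ = (-(c₁ + c₂)γ₂ₖ + λ + q - αc₁ + √Δₖ)/(2c₁) (the larger root), one has γ₁ₖ/γ₂ₖ → -c₂/c₁ as k → ∞; in particular γ₁ₖ → -∞. -/
/-! Since `√(a x² + b x + c) / x → √a`, the larger root divided by `γ₂` tends to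
`(-(c₁ + c₂) + (c₁ - c₂)) / (2 c₁) = -c₂ / c₁`; a negative limiting ratio together with
`γ₂ → ∞` forces the root to `-∞`. -/

open Filter Real Topology

theorem tendsto_sqrt_quadratic_div_atTop (a b c : ℝ) :
    Tendsto (fun x => √(a * x ^ 2 + b * x + c) / x) atTop (𝓝 (√a)) := by
  have hlim : Tendsto (fun x : ℝ => √(a + b * x⁻¹ + c * x⁻¹ ^ 2)) atTop (𝓝 (√a)) := by
    have h := tendsto_inv_atTop_zero (𝕜 := ℝ)
    simpa using ((tendsto_const_nhds.add (h.const_mul b)).add (h.pow 2 |>.const_mul c)).sqrt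
  refine hlim.congr' ?_
  filter_upwards [eventually_gt_atTop 0] with x hx
  have hfactor : a * x ^ 2 + b * x + c = x ^ 2 * (a + b * x⁻¹ + c * x⁻¹ ^ 2) := by
    field_simp
  rw [eq_div_iff hx.ne', hfactor, sqrt_mul (sq_nonneg x), sqrt_sq hx.le, mul_comm]

theorem tendsto_quadratic_root_div_atTop (p d a b c e : ℝ) :
    Tendsto (fun x => ((p * x + d + √(a * x ^ 2 + b * x + c)) / e) / x) atTop
      (𝓝 ((p + √a) / e)) := by
  have hd : Tendsto (fun x : ℝ => d / x) atTop (𝓝 0) := tendsto_const_nhds.div_atTop tendsto_id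
  have hsum := ((tendsto_const_nhds (x := p)).add hd).add (tendsto_sqrt_quadratic_div_atTop a b c)
  rw [add_zero] at hsum
  refine (hsum.div_const e).congr' ?_
  filter_upwards [eventually_gt_atTop 0] with x hx
  field_simp

theorem tendsto_atBot_of_div_self_tendsto_neg {f : ℝ → ℝ} {L : ℝ} (hL : L < 0)
    (h : Tendsto (fun x => f x / x) atTop (𝓝 L)) : Tendsto f atTop atBot := by
  refine (h.neg_mul_atTop hL tendsto_id).congr' ?_
  filter_upwards [eventually_gt_atTop 0] with x hx
  exact div_mul_cancel₀ _ hx.ne'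

theorem ratio_gamma1_gamma2_tendsto_general (α lam q c₁ c₂ : ℝ) (γ₂ : ℕ → ℝ)
    (hc₂ : 0 < c₂) (hc : c₂ < c₁)
    (htop : Filter.Tendsto γ₂ Filter.atTop Filter.atTop) :
    Filter.Tendsto (fun k =>
      ((-(c₁ + c₂) * γ₂ k + lam + q - α * c₁
        + Real.sqrt ((c₁ - c₂)^2 * (γ₂ k)^2
            + 2 * γ₂ k * (c₁ - c₂) * (α * c₁ + lam + q)
            + (α * c₁ - lam - q)^2 + 4 * c₁ * α * q)) / (2 * c₁)) / γ₂ k)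
      Filter.atTop (nhds (-c₂ / c₁)) ∧
    Filter.Tendsto (fun k =>
      (-(c₁ + c₂) * γ₂ k + lam + q - α * c₁
        + Real.sqrt ((c₁ - c₂)^2 * (γ₂ k)^2
            + 2 * γ₂ k * (c₁ - c₂) * (α * c₁ + lam + q)
            + (α * c₁ - lam - q)^2 + 4 * c₁ * α * q)) / (2 * c₁))
      Filter.atTop Filter.atBot := by
  have hc₁ : 0 < c₁ := hc₂.trans hc
  set γ₁ : ℝ → ℝ := fun x => (-(c₁ + c₂) * x + lam + q - α * c₁
    + √((c₁ - c₂) ^ 2 * x ^ 2 + 2 * x * (c₁ - c₂) * (α * c₁ + lam + q)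
      + (α * c₁ - lam - q) ^ 2 + 4 * c₁ * α * q)) / (2 * c₁)
  have hlimit : (-(c₁ + c₂) + √((c₁ - c₂) ^ 2)) / (2 * c₁) = -c₂ / c₁ := by
    rw [sqrt_sq (sub_nonneg.mpr hc.le)]
    field_simp
    ring
  have hratio : Tendsto (fun x => γ₁ x / x) atTop (𝓝 (-c₂ / c₁)) := by
    rw [← hlimit]
    refine (tendsto_quadratic_root_div_atTop (-(c₁ + c₂)) (lam + q - α * c₁) ((c₁ - c₂) ^ 2)
      (2 * (c₁ - c₂) * (α * c₁ + lam + q)) ((α * c₁ - lam - q) ^ 2 + 4 * c₁ * α * q)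
      (2 * c₁)).congr fun x => ?_
    simp only [γ₁]
    ring_nf
  have hneg : -c₂ / c₁ < 0 := div_neg_of_neg_of_pos (neg_neg_of_pos hc₂) hc₁
  exact ⟨hratio.comp htop, (tendsto_atBot_of_div_self_tendsto_neg hneg hratio).comp htop⟩

theorem ratio_gamma1_gamma2_tendsto (α lam q c₁ c₂ : ℝ) (γ₂ : ℕ → ℝ)
    (hα : 0 < α) (hlam : 0 < lam) (hq : 0 < q)
    (hc₂ : 0 < c₂) (hc : c₂ < c₁)
    (hpos : ∀ k, 0 < γ₂ k)
    (htop : Filter.Tendsto γ₂ Filter.atTop Filter.atTop) :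
    Filter.Tendsto (fun k =>
      ((-(c₁ + c₂) * γ₂ k + lam + q - α * c₁
        + Real.sqrt ((c₁ - c₂)^2 * (γ₂ k)^2
            + 2 * γ₂ k * (c₁ - c₂) * (α * c₁ + lam + q)
            + (α * c₁ - lam - q)^2 + 4 * c₁ * α * q)) / (2 * c₁)) / γ₂ k)
      Filter.atTop (nhds (-c₂ / c₁)) ∧
    Filter.Tendsto (fun k =>
      (-(c₁ + c₂) * γ₂ k + lam + q - α * c₁
        + Real.sqrt ((c₁ - c₂)^2 * (γ₂ k)^2
            + 2 * γ₂ k * (c₁ - c₂) * (α * c₁ + lam + q)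
            + (α * c₁ - lam - q)^2 + 4 * c₁ * α * q)) / (2 * c₁))
      Filter.atTop Filter.atBot :=
  ratio_gamma1_gamma2_tendsto_general α lam q c₁ c₂ γ₂ hc₂ hc htop
end

section
/- The scale function W^{(q)}(x) = c₂⁻¹(A₊ e^{q⁺x} - A₋ e^{q⁻x}) with A_± = (α + q^±)/(q⁺ - q⁻) satisfies the Laplace transform identity ∫₀^∞ e^{-θx} W^{(q)}(x) dx = 1/(ψ(θ) - q) for all θ > q⁺, where ψ(θ) = c₂θ - λθ/(α + θ). -/
/-!
Multiplying `W` by `e^{-θx}` leaves two decaying exponentials, whose Laplace transforms are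
`1 / (θ - q^±)`. Partial fractions recombine them into `(α + θ) / (c₂ (θ - q⁺) (θ - q⁻))`, and
this is `1 / (ψ(θ) - q)` because `q^±` are the roots of `(α + θ)(ψ(θ) - q) = c₂θ² - (q + λ - αc₂)θ - qα`.
-/

open MeasureTheory Set Real

section LaplaceTransform

lemma exp_neg_mul_mul_exp (a θ x : ℝ) : exp (-θ * x) * exp (a * x) = exp ((a - θ) * x) := by
  rw [← exp_add]; ring_nf

lemma integrableOn_exp_neg_mul_mul_exp_Ioi {a θ : ℝ} (h : a < θ) :
    IntegrableOn (fun x => exp (-θ * x) * exp (a * x)) (Ioi 0) := by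
  simpa only [exp_neg_mul_mul_exp] using integrableOn_exp_mul_Ioi (sub_neg.mpr h) 0

lemma integral_exp_neg_mul_mul_exp_Ioi {a θ : ℝ} (h : a < θ) :
    ∫ x in Ioi (0 : ℝ), exp (-θ * x) * exp (a * x) = 1 / (θ - a) := by
  simp only [exp_neg_mul_mul_exp, integral_exp_mul_Ioi (sub_neg.mpr h), mul_zero, exp_zero,
    neg_div, ← div_neg, neg_sub]

lemma integral_exp_neg_mul_mul_sub_exp_Ioi {a b θ : ℝ} (ha : a < θ) (hb : b < θ) (C A B : ℝ) :
    ∫ x in Ioi (0 : ℝ), exp (-θ * x) * (C * (A * exp (a * x) - B * exp (b * x))) =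
      C * (A / (θ - a) - B / (θ - b)) := by
  have hsplit : ∀ x, exp (-θ * x) * (C * (A * exp (a * x) - B * exp (b * x))) =
      C * (A * (exp (-θ * x) * exp (a * x)) - B * (exp (-θ * x) * exp (b * x))) := fun x => by
    ring
  simp only [hsplit]
  rw [integral_const_mul, integral_sub ((integrableOn_exp_neg_mul_mul_exp_Ioi ha).const_mul A)
    ((integrableOn_exp_neg_mul_mul_exp_Ioi hb).const_mul B), integral_const_mul,
    integral_const_mul, integral_exp_neg_mul_mul_exp_Ioi ha, integral_exp_neg_mul_mul_exp_Ioi hb]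
  ring

end LaplaceTransform

section QuadraticRoots

variable {c b k : ℝ}

lemma mul_sub_mul_sub_quadratic_roots (hc : c ≠ 0) (hD : 0 ≤ b ^ 2 + 4 * c * k) (t : ℝ) :
    c * ((t - (b + √(b ^ 2 + 4 * c * k)) / (2 * c)) * (t - (b - √(b ^ 2 + 4 * c * k)) / (2 * c)))
      = c * t ^ 2 - b * t - k := by
  have hs := sq_sqrt hD
  set s := √(b ^ 2 + 4 * c * k)
  field_simp
  linear_combination (-1 : ℝ) * hs

lemma quadratic_root_sub_lt_add (hc : 0 < c) (hD : 0 < b ^ 2 + 4 * c * k) :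
    (b - √(b ^ 2 + 4 * c * k)) / (2 * c) < (b + √(b ^ 2 + 4 * c * k)) / (2 * c) := by
  have := sqrt_pos.mpr hD
  gcongr
  linarith

lemma quadratic_root_add_nonneg (hc : 0 < c) (hk : 0 ≤ k) :
    0 ≤ (b + √(b ^ 2 + 4 * c * k)) / (2 * c) := by
  have hb : |b| ≤ √(b ^ 2 + 4 * c * k) := by
    rw [← sqrt_sq_eq_abs]
    exact sqrt_le_sqrt (by nlinarith)
  have := neg_abs_le b
  apply div_nonneg <;> linarith

end QuadraticRoots

lemma partial_fractions {a b α θ : ℝ} (hab : a ≠ b) (ha : θ ≠ a) (hb : θ ≠ b) :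
    (α + a) / (a - b) / (θ - a) - (α + b) / (a - b) / (θ - b) = (α + θ) / ((θ - a) * (θ - b)) := by
  have := sub_ne_zero.mpr hab
  have := sub_ne_zero.mpr ha
  have := sub_ne_zero.mpr hb
  field_simp
  ring

theorem scale_function_laplace_transform_general (α lam c₂ q θ : ℝ)
    (hα : 0 < α) (hc₂ : 0 < c₂) (hq : 0 < q)
    (hθ : (q + lam - α * c₂ + Real.sqrt ((q + lam - α * c₂)^2 + 4 * c₂ * q * α)) / (2 * c₂) < θ) :
    let qp := (q + lam - α * c₂ + Real.sqrt ((q + lam - α * c₂)^2 + 4 * c₂ * q * α)) / (2 * c₂)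
    let qm := (q + lam - α * c₂ - Real.sqrt ((q + lam - α * c₂)^2 + 4 * c₂ * q * α)) / (2 * c₂)
    let Ap := (α + qp) / (qp - qm)
    let Am := (α + qm) / (qp - qm)
    let W : ℝ → ℝ := fun x => c₂⁻¹ * (Ap * Real.exp (qp * x) - Am * Real.exp (qm * x))
    let ψ : ℝ → ℝ := fun t => c₂ * t - lam * t / (α + t)
    (∫ x in Set.Ioi (0:ℝ), Real.exp (-θ * x) * W x) = 1 / (ψ θ - q) := by
  intro qp qm Ap Am W ψ
  have hk : 0 < q * α := mul_pos hq hα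
  have hqm_lt : qm < qp := by
    simp only [qm, qp, mul_assoc (4 * c₂) q α]
    exact quadratic_root_sub_lt_add hc₂ (by positivity)
  have hqp_nonneg : 0 ≤ qp := by
    simp only [qp, mul_assoc (4 * c₂) q α]
    exact quadratic_root_add_nonneg hc₂ hk.le
  have hαθ : α + θ ≠ 0 := by linarith
  have hfactor : c₂ * ((θ - qp) * (θ - qm)) = c₂ * θ ^ 2 - (q + lam - α * c₂) * θ - q * α := by
    simp only [qm, qp, mul_assoc (4 * c₂) q α]
    exact mul_sub_mul_sub_quadratic_roots hc₂.ne' (by positivity) θ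
  have hψ : ψ θ - q = c₂ * ((θ - qp) * (θ - qm)) / (α + θ) := by
    rw [hfactor, eq_div_iff hαθ]
    simp only [ψ]
    field_simp
    ring
  calc ∫ x in Ioi (0 : ℝ), exp (-θ * x) * W x
      = c₂⁻¹ * (Ap / (θ - qp) - Am / (θ - qm)) :=
        integral_exp_neg_mul_mul_sub_exp_Ioi hθ (hqm_lt.trans hθ) _ _ _
    _ = c₂⁻¹ * ((α + θ) / ((θ - qp) * (θ - qm))) := by
        rw [partial_fractions hqm_lt.ne' hθ.ne' (hqm_lt.trans hθ).ne']
    _ = 1 / (ψ θ - q) := by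
        rw [hψ]
        field_simp

theorem scale_function_laplace_transform (α lam c₂ q θ : ℝ)
    (hα : 0 < α) (hlam : 0 < lam) (hc₂ : 0 < c₂) (hq : 0 < q)
    (hθ : (q + lam - α * c₂ + Real.sqrt ((q + lam - α * c₂)^2 + 4 * c₂ * q * α)) / (2 * c₂) < θ) :
    let qp := (q + lam - α * c₂ + Real.sqrt ((q + lam - α * c₂)^2 + 4 * c₂ * q * α)) / (2 * c₂)
    let qm := (q + lam - α * c₂ - Real.sqrt ((q + lam - α * c₂)^2 + 4 * c₂ * q * α)) / (2 * c₂)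
    let Ap := (α + qp) / (qp - qm)
    let Am := (α + qm) / (qp - qm)
    let W : ℝ → ℝ := fun x => c₂⁻¹ * (Ap * Real.exp (qp * x) - Am * Real.exp (qm * x))
    let ψ : ℝ → ℝ := fun t => c₂ * t - lam * t / (α + t)
    (∫ x in Set.Ioi (0:ℝ), Real.exp (-θ * x) * W x) = 1 / (ψ θ - q) :=
  scale_function_laplace_transform_general α lam c₂ q θ hα hc₂ hq hθ
end

section
/- Let γ₂ > 0 be the positive root of P(x) = ((a² + a)c₁ + (1 + a)c₂)x² + (a(αc₁ - q - λ) + αc₂ - q - λ)x - αq with a, α, q, λ, c₂ > 0, c₁ > c₂, c₁ > λ/α. Then γ₂ > a(λ + q - αc₁)/((a² + a)c₁ + ac₂); i.e., ((a² + a)c₁ + ac₂)γ₂ + a(αc₁ - q - λ) > 0. -/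
/-!
Write `E = ((a² + a)c₁ + ac₂)γ + a(αc₁ - q - λ)`. Then
`P(γ) = γE + (c₂γ - q)(γ + α) - λγ`.
If `c₂γ ≥ q`, then `E = (a² + a)c₁γ + a(c₂γ - q) + a(αc₁ - λ)` is positive term by term, using the
net profit condition `λ < αc₁`. Otherwise `P(γ) = 0` gives `γE = (q - c₂γ)(γ + α) + λγ > 0`.
-/

lemma quadratic_eq_mul_add_sub (a α q lam c₁ c₂ γ : ℝ) :
    ((a^2 + a) * c₁ + (1 + a) * c₂) * γ^2
        + (a * (α * c₁ - q - lam) + α * c₂ - q - lam) * γ - α * q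
      = γ * (((a^2 + a) * c₁ + a * c₂) * γ + a * (α * c₁ - q - lam))
        + (c₂ * γ - q) * (γ + α) - lam * γ := by
  ring

lemma pos_of_quadratic_eq_zero {a α q lam c₁ c₂ γ : ℝ}
    (ha : 0 < a) (hα : 0 < α) (hlam : 0 ≤ lam) (hc₁ : 0 < c₁) (hnet : lam < α * c₁)
    (hγ : 0 < γ)
    (hroot : ((a^2 + a) * c₁ + (1 + a) * c₂) * γ^2
        + (a * (α * c₁ - q - lam) + α * c₂ - q - lam) * γ - α * q = 0) :
    0 < ((a^2 + a) * c₁ + a * c₂) * γ + a * (α * c₁ - q - lam) := by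
  rcases le_or_gt q (c₂ * γ) with hqγ | hγq
  · have : 0 < (a^2 + a) * c₁ * γ := by positivity
    nlinarith [mul_nonneg ha.le (sub_nonneg.mpr hqγ), mul_pos ha (sub_pos.mpr hnet)]
  · rw [quadratic_eq_mul_add_sub] at hroot
    have : 0 < γ * (((a^2 + a) * c₁ + a * c₂) * γ + a * (α * c₁ - q - lam)) := by
      nlinarith [mul_pos (sub_pos.mpr hγq) (add_pos hγ hα), mul_nonneg hlam hγ.le]
    exact pos_of_mul_pos_right this hγ.le

theorem gamma2_lower_bound_general (a α q lam c₁ c₂ γ₂ : ℝ)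
    (ha : 0 < a) (hα : 0 < α) (hlam : 0 < lam)
    (hc₂ : 0 < c₂) (hnet : lam / α < c₁)
    (hγ₂pos : 0 < γ₂)
    (hroot : ((a^2 + a) * c₁ + (1 + a) * c₂) * γ₂^2
        + (a * (α * c₁ - q - lam) + α * c₂ - q - lam) * γ₂ - α * q = 0) :
    a * (lam + q - α * c₁) / ((a^2 + a) * c₁ + a * c₂) < γ₂ ∧
    0 < ((a^2 + a) * c₁ + a * c₂) * γ₂ + a * (α * c₁ - q - lam) := by
  have hnet' : lam < α * c₁ := by rwa [div_lt_iff₀' hα] at hnet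
  have hc₁ : 0 < c₁ := (div_pos hlam hα).trans hnet
  have hE := pos_of_quadratic_eq_zero ha hα hlam.le hc₁ hnet' hγ₂pos hroot
  have hD : 0 < (a^2 + a) * c₁ + a * c₂ := by positivity
  refine ⟨?_, hE⟩
  rw [div_lt_iff₀ hD]
  linarith

theorem gamma2_lower_bound (a α q lam c₁ c₂ γ₂ : ℝ)
    (ha : 0 < a) (hα : 0 < α) (hq : 0 < q) (hlam : 0 < lam)
    (hc₂ : 0 < c₂) (hc : c₂ < c₁) (hnet : lam / α < c₁)
    (hγ₂pos : 0 < γ₂)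
    (hroot : ((a^2 + a) * c₁ + (1 + a) * c₂) * γ₂^2
        + (a * (α * c₁ - q - lam) + α * c₂ - q - lam) * γ₂ - α * q = 0) :
    a * (lam + q - α * c₁) / ((a^2 + a) * c₁ + a * c₂) < γ₂ ∧
    0 < ((a^2 + a) * c₁ + a * c₂) * γ₂ + a * (α * c₁ - q - lam) :=
  gamma2_lower_bound_general a α q lam c₁ c₂ γ₂ ha hα hlam hc₂ hnet hγ₂pos hroot
end

section
/- For a sequence defined by the recursion γ₂,ₖ₊₁ = larger root of the quadratic (in x) A·x² + [(γ₃,ₖ - aγ₂,ₖ)(2c₁a + c₁ + c₂) - (λ + q)(1 + a) + α(ac₁ + c₂)]x + c₁(γ₃,ₖ - aγ₂,ₖ)² + (c₁α - λ - q)(γ₃,ₖ - aγ₂,ₖ) - αq, where A = (a² + a)c₁ + (1 + a)c₂ and γ₃,ₖ is the smaller root associated to γ₂,ₖ via c₁γ² + (c₁+c₂)γ₂,ₖγ + c₂γ₂,ₖ² + (αc₁ - q - λ)γ + (αc₂ - q - λ)γ₂,ₖ - αq = 0, the ratio γ₂,ₖ₊₁/γ₂,ₖ converges to (ac₁ + c₁)/(ac₁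 + c₂) > 1 as γ₂,ₖ → ∞, assuming a, α, λ, q > 0 and c₁ > c₂ > 0. -/
/-!
Write `x = γ₂ k`. If the coefficients of `A X² + B X + C` satisfy `B ~ b x` and `C ~ c x²`, its roots
are asymptotic to `x` times the roots of `A X² + b X + c`. The quadratic defining `γ₃` tends in this
sense to `c₁ X² + (c₁ + c₂) X + c₂ = (c₁ X + c₂)(X + 1)`, so `γ₃ ~ -γ₂` and `γ₃ - a γ₂ ~ -(1 + a) γ₂`.
Then the quadratic defining `γ₂'` tends to `(1 + a)(a c₁ + c₂)(X - 1)(X - r)` with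
`r = (a c₁ + c₁) / (a c₁ + c₂)`, and `γ₂'` is its larger root.
-/

open Filter Topology

/-- `ε = 1` gives the larger and `ε = -1` the smaller root of `A X² + B X + C` when `A > 0`. -/
noncomputable def quadRoot (ε A B C : ℝ) : ℝ := (-B + ε * √(discrim A B C)) / (2 * A)

lemma quadRoot_mul (ε A B C : ℝ) {x : ℝ} (hx : 0 ≤ x) :
    quadRoot ε A (x * B) (x ^ 2 * C) = x * quadRoot ε A B C := by
  have hdiscrim : discrim A (x * B) (x ^ 2 * C) = x ^ 2 * discrim A B C := by
    unfold discrim; ring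
  rw [quadRoot, quadRoot, hdiscrim, Real.sqrt_mul (sq_nonneg x), Real.sqrt_sq hx]
  ring

lemma quadRoot_of_discrim_eq_sq (ε : ℝ) {A B C d : ℝ} (h : discrim A B C = d ^ 2) (hd : 0 ≤ d) :
    quadRoot ε A B C = (-B + ε * d) / (2 * A) := by
  rw [quadRoot, h, Real.sqrt_sq hd]

lemma quadRoot_neg_one_eq_neg_one {c₁ c₂ : ℝ} (hc₁ : 0 < c₁) (hc : c₂ ≤ c₁) :
    quadRoot (-1) c₁ ((c₁ + c₂) * 1) (c₂ * 1 ^ 2) = -1 := by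
  rw [quadRoot_of_discrim_eq_sq _ (d := c₁ - c₂) (by unfold discrim; ring) (by linarith)]
  field_simp
  ring

lemma quadRoot_one_eq_div {a c₁ c₂ : ℝ} (ha : 0 ≤ a) (hc₂ : 0 < c₂) (hc : c₂ ≤ c₁) :
    quadRoot 1 ((a ^ 2 + a) * c₁ + (1 + a) * c₂) ((2 * c₁ * a + c₁ + c₂) * (-1 - a))
      (c₁ * (-1 - a) ^ 2) = (a * c₁ + c₁) / (a * c₁ + c₂) := by
  have hc₁ : 0 < c₁ := hc₂.trans_le hc
  rw [quadRoot_of_discrim_eq_sq _ (d := (1 + a) * (c₁ - c₂)) (by unfold discrim; ring)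
    (mul_nonneg (by linarith) (by linarith))]
  field_simp
  ring

lemma Filter.Tendsto.quadRoot {ι : Type*} {l : Filter ι} {B C : ι → ℝ} {B₀ C₀ : ℝ} (ε A : ℝ)
    (hB : Tendsto B l (𝓝 B₀)) (hC : Tendsto C l (𝓝 C₀)) :
    Tendsto (fun i => quadRoot ε A (B i) (C i)) l (𝓝 (quadRoot ε A B₀ C₀)) := by
  unfold _root_.quadRoot discrim
  exact (hB.neg.add (((hB.pow 2).sub (hC.const_mul (4 * A))).sqrt.const_mul ε)).div_const _

section

variable {ι : Type*} {l : Filter ι} {x y : ι → ℝ} {η : ℝ}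

lemma tendsto_quadRoot_div (ε A : ℝ) {B C : ι → ℝ} {B₀ C₀ : ℝ} (hx : ∀ᶠ i in l, 0 < x i)
    (hB : Tendsto (fun i => B i / x i) l (𝓝 B₀)) (hC : Tendsto (fun i => C i / x i ^ 2) l (𝓝 C₀)) :
    Tendsto (fun i => quadRoot ε A (B i) (C i) / x i) l (𝓝 (quadRoot ε A B₀ C₀)) := by
  refine (hB.quadRoot ε A hC).congr' ?_
  filter_upwards [hx] with i hxi
  rw [eq_div_iff hxi.ne', mul_comm, ← quadRoot_mul _ _ _ _ hxi.le, mul_div_cancel₀ _ hxi.ne',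
    mul_div_cancel₀ _ (pow_ne_zero 2 hxi.ne')]

lemma tendsto_mul_add_div (hx : Tendsto x l atTop) (hy : Tendsto (fun i => y i / x i) l (𝓝 η))
    (K L : ℝ) : Tendsto (fun i => (K * y i + L) / x i) l (𝓝 (K * η)) := by
  have hinv := tendsto_inv_atTop_zero.comp hx
  have h := (hy.const_mul K).add (hinv.const_mul L)
  rw [mul_zero, add_zero] at h
  refine h.congr' ?_
  filter_upwards [hx.eventually_ne_atTop 0] with i hxi
  simp only [Function.comp_apply]
  field_simp

lemma tendsto_quadratic_div_sq (hx : Tendsto x l atTop)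
    (hy : Tendsto (fun i => y i / x i) l (𝓝 η)) (c M N : ℝ) :
    Tendsto (fun i => (c * y i ^ 2 + M * y i + N) / x i ^ 2) l (𝓝 (c * η ^ 2)) := by
  have hinv := tendsto_inv_atTop_zero.comp hx
  have h := ((hy.pow 2).const_mul c).add (((hy.mul hinv).const_mul M).add ((hinv.pow 2).const_mul N))
  simp only [mul_zero, zero_pow two_ne_zero, add_zero] at h
  refine h.congr' ?_
  filter_upwards [hx.eventually_ne_atTop 0] with i hxi
  simp only [Function.comp_apply]
  field_simp
  ring

lemma tendsto_quadRoot_div_of_tendsto_div (ε A K L c M N : ℝ) (hx : Tendsto x l atTop)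
    (hy : Tendsto (fun i => y i / x i) l (𝓝 η)) :
    Tendsto (fun i => quadRoot ε A (K * y i + L) (c * y i ^ 2 + M * y i + N) / x i) l
      (𝓝 (quadRoot ε A (K * η) (c * η ^ 2))) :=
  tendsto_quadRoot_div ε A (hx.eventually_gt_atTop 0) (tendsto_mul_add_div hx hy K L)
    (tendsto_quadratic_div_sq hx hy c M N)

end

theorem ratio_gamma2_recursion_tendsto_general (a α lam q c₁ c₂ : ℝ)
    (γ₂ : ℕ → ℝ) (γ₃ : ℕ → ℝ) (γ₂' : ℕ → ℝ)
    (ha : 0 < a)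
    (hc₂ : 0 < c₂) (hc : c₂ < c₁)
    (htop : Filter.Tendsto γ₂ Filter.atTop Filter.atTop)
    (hγ₃ : ∀ k, γ₃ k =
      (-(c₁ + c₂) * γ₂ k + lam + q - α * c₁
        - Real.sqrt ((c₁ - c₂)^2 * (γ₂ k)^2
            + 2 * γ₂ k * (c₁ - c₂) * (α * c₁ + lam + q)
            + (α * c₁ - lam - q)^2 + 4 * c₁ * α * q)) / (2 * c₁))
    (hγ₂' : ∀ k, γ₂' k =
      (-((γ₃ k - a * γ₂ k) * (2 * c₁ * a + c₁ + c₂) - (lam + q) * (1 + a)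
          + α * (a * c₁ + c₂))
        + Real.sqrt (((γ₃ k - a * γ₂ k) * (2 * c₁ * a + c₁ + c₂)
              - (lam + q) * (1 + a) + α * (a * c₁ + c₂))^2
            - 4 * ((a^2 + a) * c₁ + (1 + a) * c₂)
              * (c₁ * (γ₃ k - a * γ₂ k)^2
                + (c₁ * α - lam - q) * (γ₃ k - a * γ₂ k) - α * q)))
        / (2 * ((a^2 + a) * c₁ + (1 + a) * c₂))) :
    Filter.Tendsto (fun k => γ₂' k / γ₂ k) Filter.atTop
      (nhds ((a * c₁ + c₁) / (a * c₁ + c₂))) ∧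
    1 < (a * c₁ + c₁) / (a * c₁ + c₂) := by
  have hid : Tendsto (fun k => γ₂ k / γ₂ k) atTop (𝓝 1) :=
    tendsto_const_nhds.congr' <| (htop.eventually_ne_atTop 0).mono fun k hk => (div_self hk).symm
  have hγ₃root : ∀ k, γ₃ k = quadRoot (-1) c₁ ((c₁ + c₂) * γ₂ k + (α * c₁ - lam - q))
      (c₂ * γ₂ k ^ 2 + (α * c₂ - lam - q) * γ₂ k + -(α * q)) := fun k => by
    rw [hγ₃ k, quadRoot, discrim]
    ring_nf
  have hγ₃lim : Tendsto (fun k => γ₃ k / γ₂ k) atTop (𝓝 (-1)) := by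
    have h := tendsto_quadRoot_div_of_tendsto_div (-1) c₁ (c₁ + c₂) (α * c₁ - lam - q) c₂
      (α * c₂ - lam - q) (-(α * q)) htop hid
    rw [quadRoot_neg_one_eq_neg_one (hc₂.trans hc) hc.le] at h
    simpa only [hγ₃root] using h
  have hylim : Tendsto (fun k => (γ₃ k - a * γ₂ k) / γ₂ k) atTop (𝓝 (-1 - a)) := by
    have h := hγ₃lim.sub (hid.const_mul a)
    rw [mul_one] at h
    refine h.congr' ?_
    filter_upwards [htop.eventually_ne_atTop 0] with k hk
    field_simp
  have hγ₂'root : ∀ k, γ₂' k = quadRoot 1 ((a ^ 2 + a) * c₁ + (1 + a) * c₂)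
      ((2 * c₁ * a + c₁ + c₂) * (γ₃ k - a * γ₂ k) + (α * (a * c₁ + c₂) - (lam + q) * (1 + a)))
      (c₁ * (γ₃ k - a * γ₂ k) ^ 2 + (c₁ * α - lam - q) * (γ₃ k - a * γ₂ k) + -(α * q)) :=
    fun k => by
      rw [hγ₂' k, quadRoot, discrim]
      ring_nf
  have hγ₂'lim := tendsto_quadRoot_div_of_tendsto_div 1 ((a ^ 2 + a) * c₁ + (1 + a) * c₂)
    (2 * c₁ * a + c₁ + c₂) (α * (a * c₁ + c₂) - (lam + q) * (1 + a)) c₁ (c₁ * α - lam - q)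
    (-(α * q)) htop hylim
  rw [quadRoot_one_eq_div ha.le hc₂ hc.le] at hγ₂'lim
  refine ⟨by simpa only [hγ₂'root] using hγ₂'lim, ?_⟩
  rw [one_lt_div (add_pos (mul_pos ha (hc₂.trans hc)) hc₂)]
  linarith

theorem ratio_gamma2_recursion_tendsto (a α lam q c₁ c₂ : ℝ)
    (γ₂ : ℕ → ℝ) (γ₃ : ℕ → ℝ) (γ₂' : ℕ → ℝ)
    (ha : 0 < a) (hα : 0 < α) (hlam : 0 < lam) (hq : 0 < q)
    (hc₂ : 0 < c₂) (hc : c₂ < c₁)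
    (hpos : ∀ k, 0 < γ₂ k)
    (htop : Filter.Tendsto γ₂ Filter.atTop Filter.atTop)
    (hγ₃ : ∀ k, γ₃ k =
      (-(c₁ + c₂) * γ₂ k + lam + q - α * c₁
        - Real.sqrt ((c₁ - c₂)^2 * (γ₂ k)^2
            + 2 * γ₂ k * (c₁ - c₂) * (α * c₁ + lam + q)
            + (α * c₁ - lam - q)^2 + 4 * c₁ * α * q)) / (2 * c₁))
    (hγ₂' : ∀ k, γ₂' k =
      (-((γ₃ k - a * γ₂ k) * (2 * c₁ * a + c₁ + c₂) - (lam + q) * (1 + a)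
          + α * (a * c₁ + c₂))
        + Real.sqrt (((γ₃ k - a * γ₂ k) * (2 * c₁ * a + c₁ + c₂)
              - (lam + q) * (1 + a) + α * (a * c₁ + c₂))^2
            - 4 * ((a^2 + a) * c₁ + (1 + a) * c₂)
              * (c₁ * (γ₃ k - a * γ₂ k)^2
                + (c₁ * α - lam - q) * (γ₃ k - a * γ₂ k) - α * q)))
        / (2 * ((a^2 + a) * c₁ + (1 + a) * c₂))) :
    Filter.Tendsto (fun k => γ₂' k / γ₂ k) Filter.atTop
      (nhds ((a * c₁ + c₁) / (a * c₁ + c₂))) ∧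
    1 < (a * c₁ + c₁) / (a * c₁ + c₂) :=
  ratio_gamma2_recursion_tendsto_general a α lam q c₁ c₂ γ₂ γ₃ γ₂' ha hc₂ hc htop hγ₃ hγ₂'
end
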